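/- After an incremental update on the set E_i(v) of edges incoming to v, if flag(b,s) = WT-changed (i.e., d'(b,s) < d(b,s)), then every shortest path from b to s in G' passes through the vertex v. -/

import Mathlib

open scoped ENNReal

namespace BC

variable {V : Type*}

/-- `p` is a path from `s` to `t` in the weighted digraph with weight function `w`;
an edge is present iff its weight is not `⊤`. -/
def IsPath (w : V → V → ℝ≥0∞) (s t : V) (p : List V) : Prop :=
  p ≠ [] ∧ p.head? = some s ∧ p.getLast? = some t ∧ p.Chain' (fun a b => w a b ≠ ⊤)

/-- The weight of a path: the sum of the weights of its consecutive edges. -/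
noncomputable def pWeight (w : V → V → ℝ≥0∞) (p : List V) : ℝ≥0∞ :=
  ((p.zip p.tail).map fun e => w e.1 e.2).sum

/-- The shortest-path distance `d(s,t)` (equal to `⊤` if no path exists). -/
noncomputable def dist (w : V → V → ℝ≥0∞) (s t : V) : ℝ≥0∞ :=
  ⨅ p ∈ {p | IsPath w s t p}, pWeight w p

/-- `p` is a shortest path from `s` to `t`. -/
def IsShortest (w : V → V → ℝ≥0∞) (s t : V) (p : List V) : Prop :=
  IsPath w s t p ∧ pWeight w p = dist w s t

/-- `σ_{st}`: the number of shortest paths from `s` to `t`. -/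
noncomputable def nsp (w : V → V → ℝ≥0∞) (s t : V) : ℕ :=
  Set.ncard {p | IsShortest w s t p}

/-- `σ_{st}(x)`: the number of shortest paths from `s` to `t` passing through `x`. -/
noncomputable def nspVia (w : V → V → ℝ≥0∞) (s t x : V) : ℕ :=
  Set.ncard {p | IsShortest w s t p ∧ x ∈ p}

/-- The directed edge `(a,b)` lies on the path `p`. -/
def edgeOn (p : List V) (a b : V) : Prop := (a, b) ∈ p.zip p.tail

/-- The shortest-path DAG rooted at `s`: the edges lying on shortest paths from `s`. -/
def dagSet (w : V → V → ℝ≥0∞) (s : V) : Set (V × V) :=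
  {e | w e.1 e.2 ≠ ⊤ ∧ dist w s e.1 ≠ ⊤ ∧ dist w s e.1 + w e.1 e.2 = dist w s e.2}

/-- flag(s,t) = WT-changed : the distance from `s` to `t` decreased. -/
def WTchanged (w w' : V → V → ℝ≥0∞) (s t : V) : Prop := dist w' s t < dist w s t

/-- flag(s,t) = NUM-changed : same distance, strictly more shortest paths. -/
def NUMchanged (w w' : V → V → ℝ≥0∞) (s t : V) : Prop :=
  dist w' s t = dist w s t ∧ nsp w s t < nsp w' s t

/-- flag(s,t) = UN-changed : same distance, same number of shortest paths. -/
def UNchanged (w w' : V → V → ℝ≥0∞) (s t : V) : Prop :=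
  dist w' s t = dist w s t ∧ nsp w' s t = nsp w s t

/-! A shortest path of `G'` that avoids `v` uses only edges whose weight the update left
unchanged, so it is also a path of `G` of the same weight, and then `d(b,s) ≤ d'(b,s)`. -/

section EdgeAgreement

variable {w w' : V → V → ℝ≥0∞} {s t : V} {p : List V}

lemma dist_le_pWeight (hp : IsPath w s t p) : dist w s t ≤ pWeight w p :=
  biInf_le _ hp

lemma pWeight_congr_of_tail (h : ∀ a, ∀ c ∈ p.tail, w a c = w' a c) :
    pWeight w p = pWeight w' p :=
  congrArg List.sum <| List.map_congr_left fun _ he => h _ _ (List.of_mem_zip he).2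

lemma IsPath.congr_of_tail (hp : IsPath w s t p) (h : ∀ a, ∀ c ∈ p.tail, w a c = w' a c) :
    IsPath w' s t p :=
  ⟨hp.1, hp.2.1, hp.2.2.1, hp.2.2.2.imp_of_mem_tail_imp fun a c _ hc hac => h a c hc ▸ hac⟩

lemma dist_le_of_isShortest_of_tail (hp : IsShortest w s t p)
    (h : ∀ a, ∀ c ∈ p.tail, w a c = w' a c) : dist w' s t ≤ dist w s t :=
  calc dist w' s t ≤ pWeight w' p := dist_le_pWeight (hp.1.congr_of_tail h)
    _ = pWeight w p := (pWeight_congr_of_tail h).symm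
    _ = dist w s t := hp.2

end EdgeAgreement

theorem wtchanged_through_v_general
(w w' : V → V → ℝ≥0∞) (v : V) (U : Finset V)
    (hsame : ∀ a b : V, ¬(b = v ∧ a ∈ U) → w' a b = w a b)
    (b s : V) (hwt : WTchanged w w' b s) (p : List V)
    (hp : IsShortest w' b s p) : v ∈ p := by
  by_contra hv
  have hagree : ∀ a, ∀ c ∈ p.tail, w' a c = w a c := fun a c hc =>
    hsame a c fun ⟨hcv, _⟩ => hv (List.mem_of_mem_tail (hcv ▸ hc))
  exact (dist_le_of_isShortest_of_tail hp hagree).not_gt hwt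

/-- after an incremental update on the edges `E_i(v)` incoming to `v`,
if flag(b,s) = WT-changed (i.e. `d'(b,s) < d(b,s)`) then every shortest path from
`b` to `s` in `G'` passes through `v`. -/
theorem wtchanged_through_v [Fintype V]
(w w' : V → V → ℝ≥0∞) (v : V) (U : Finset V)
    (hpos : ∀ a b, 0 < w a b) (hpos' : ∀ a b, 0 < w' a b)
    (hdec : ∀ u ∈ U, w' u v < w u v)
    (hsame : ∀ a b : V, ¬(b = v ∧ a ∈ U) → w' a b = w a b)
    (b s : V) (hwt : WTchanged w w' b s) (p : List V)
    (hp : IsShortest w' b s p) : v ∈ p :=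
  wtchanged_through_v_general w w' v U hsame b s hwt p hp

end BC
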